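/- arXiv:1406.6272 — 9 statements merged into one kernel-verified Lean document; each statement's English description precedes it below -/
import Mathlib

section
/- For every ϖ ∈ ℝ³, the map (u, u̇, ü) ↦ 𝓔(u, u̇, ü) is differentiable at every point with u ≠ 0, and its Fréchet derivative at (u, u̇, ü) applied to the direction (ϖ × u, ϖ × u̇, ϖ × ü) equals ϖ × 𝓔(u, u̇, ü). (This is the Lie-derivative invariance L(𝔵'')(𝓔) = ϖ × 𝓔 under the third-order prolongation of infinitesimal Euclidean rotations.) -/
noncomputable section
open RealInnerProductSpace

/-- Three-dimensional Euclidean space. -/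
abbrev E3 := EuclideanSpace ℝ (Fin 3)

/-- The cross product on ℝ³. -/
def cross (a b : E3) : E3 :=
  (WithLp.equiv 2 (Fin 3 → ℝ)).symm
    ![a 1 * b 2 - a 2 * b 1, a 2 * b 0 - a 0 * b 2, a 0 * b 1 - a 1 * b 0]

/-- The Euler–Poisson expression
𝓔(u, u̇, ü) = (ü × u)/‖u‖³ − 3((u̇·u)/‖u‖⁵)(u̇ × u) + (m/‖u‖³)(‖u‖² u̇ − (u̇·u) u). -/
def EP (m : ℝ) (u du ddu : E3) : E3 :=
  (‖u‖ ^ 3)⁻¹ • cross ddu u - (3 * ⟪du, u⟫ / ‖u‖ ^ 5) • cross du u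
    + (m / ‖u‖ ^ 3) • (‖u‖ ^ 2 • du - ⟪du, u⟫ • u)

/-!
Move `(u, u̇, ü)` along a curve whose velocity is the infinitesimal rotation `ϖ × ·` of its
position. Since `ϖ × ·` is skew-adjoint, the scalars `‖u‖` and `⟪u̇, u⟫` are stationary, and by
the Leibniz rule `ϖ × (x × y) = (ϖ × x) × y + x × (ϖ × y)` every cross product of such curves again
moves by `ϖ × ·`. As `𝓔` is a combination of cross products and vectors with coefficients
depending only on those scalars, its derivative along the curve is `ϖ × 𝓔`; the straight line
through `(u, u̇, ü)` with velocity `(ϖ × u, ϖ × u̇, ϖ × ü)` computes the Fréchet derivative.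
-/

open WithLp Matrix

theorem cross_eq_toLp (a b : E3) : cross a b = toLp 2 (ofLp a ⨯₃ ofLp b) := rfl

def crossL : E3 →L[ℝ] E3 →L[ℝ] E3 :=
  ((crossProduct.compl₁₂ (WithLp.linearEquiv 2 ℝ (Fin 3 → ℝ)).toLinearMap
    (WithLp.linearEquiv 2 ℝ (Fin 3 → ℝ)).toLinearMap).compr₂
    (WithLp.linearEquiv 2 ℝ (Fin 3 → ℝ)).symm.toLinearMap).toContinuousBilinearMap

theorem crossL_apply (a b : E3) : crossL a b = cross a b := rfl

theorem cross_leibniz (ϖ x y : E3) :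
    cross ϖ (cross x y) = cross (cross ϖ x) y + cross x (cross ϖ y) := by
  simp only [cross_eq_toLp]
  rw [leibniz_cross, toLp_add]

theorem inner_cross_self (ϖ x : E3) : ⟪x, cross ϖ x⟫ = 0 := by
  simp [cross_eq_toLp, EuclideanSpace.inner_eq_star_dotProduct, dotProduct_comm]

theorem inner_cross_add_inner_cross (ϖ x y : E3) : ⟪x, cross ϖ y⟫ + ⟪cross ϖ x, y⟫ = 0 := by
  simp only [cross_eq_toLp, EuclideanSpace.inner_eq_star_dotProduct, star_trivial]
  rw [dotProduct_comm, triple_product_permutation x, triple_product_permutation y,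
    ← cross_anticomm, dotProduct_neg, neg_add_cancel]

theorem HasDerivAt.norm_of_inner_eq_zero {F : Type*} [NormedAddCommGroup F]
    [InnerProductSpace ℝ F] {f : ℝ → F} {f' : F} {t : ℝ} (hf : HasDerivAt f f' t)
    (horth : ⟪f t, f'⟫ = 0) (h0 : f t ≠ 0) : HasDerivAt (fun s => ‖f s‖) 0 t := by
  simpa [horth, Real.sqrt_sq (norm_nonneg _)] using hf.norm_sq.sqrt (by positivity)

@[fun_prop]
theorem DifferentiableAt.cross {H : Type*} [NormedAddCommGroup H] [NormedSpace ℝ H]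
    {f g : H → E3} {p : H} (hf : DifferentiableAt ℝ f p) (hg : DifferentiableAt ℝ g p) :
    DifferentiableAt ℝ (fun q => cross (f q) (g q)) p :=
  (crossL.differentiableAt.comp p hf).clm_apply hg

theorem differentiableAt_EP (m : ℝ) {u : E3} (du ddu : E3) (hu : u ≠ 0) :
    DifferentiableAt ℝ (fun p : E3 × E3 × E3 => EP m p.1 p.2.1 p.2.2) (u, du, ddu) := by
  have hr : DifferentiableAt ℝ (fun p : E3 × E3 × E3 => ‖p.1‖) (u, du, ddu) :=
    differentiableAt_fst.norm ℝ hu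
  have hi : DifferentiableAt ℝ (fun p : E3 × E3 × E3 => ⟪p.2.1, p.1⟫) (u, du, ddu) :=
    differentiableAt_snd.fst.inner ℝ differentiableAt_fst
  unfold EP
  fun_prop (disch := simp [hu])

section Rotation

variable {ϖ : E3} {f g : ℝ → E3} {t : ℝ}

theorem HasDerivAt.cross_of_rot (hf : HasDerivAt f (cross ϖ (f t)) t)
    (hg : HasDerivAt g (cross ϖ (g t)) t) :
    HasDerivAt (fun s => cross (f s) (g s)) (cross ϖ (cross (f t) (g t))) t := by
  rw [cross_leibniz, add_comm]
  simpa only [crossL_apply] using crossL.hasDerivAt_of_bilinear (fun _ => hf) (fun _ => hg)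

theorem HasDerivAt.smul_of_rot {c : ℝ → ℝ} (hc : HasDerivAt c 0 t)
    (hf : HasDerivAt f (cross ϖ (f t)) t) :
    HasDerivAt (fun s => c s • f s) (cross ϖ (c t • f t)) t := by
  simpa [← crossL_apply] using hc.fun_smul hf

theorem HasDerivAt.inner_of_rot (hf : HasDerivAt f (cross ϖ (f t)) t)
    (hg : HasDerivAt g (cross ϖ (g t)) t) : HasDerivAt (fun s => ⟪f s, g s⟫) 0 t := by
  simpa only [inner_cross_add_inner_cross] using hf.inner ℝ hg

theorem HasDerivAt.norm_of_rot (hf : HasDerivAt f (cross ϖ (f t)) t) (h0 : f t ≠ 0) :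
    HasDerivAt (fun s => ‖f s‖) 0 t :=
  hf.norm_of_inner_eq_zero (inner_cross_self ϖ (f t)) h0

theorem HasDerivAt.EP_of_rot (m : ℝ) {x y z : ℝ → E3} (hx : HasDerivAt x (cross ϖ (x t)) t)
    (hy : HasDerivAt y (cross ϖ (y t)) t) (hz : HasDerivAt z (cross ϖ (z t)) t) (h0 : x t ≠ 0) :
    HasDerivAt (fun s => EP m (x s) (y s) (z s)) (cross ϖ (EP m (x t) (y t) (z t))) t := by
  have hnorm := hx.norm_of_rot h0
  have hinner := hy.inner_of_rot hx
  have hr0 : ‖x t‖ ≠ 0 := norm_ne_zero_iff.2 h0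
  have c₁ : HasDerivAt (fun s => (‖x s‖ ^ 3)⁻¹) 0 t := by
    simpa using (hnorm.fun_pow 3).fun_inv (pow_ne_zero 3 hr0)
  have c₂ : HasDerivAt (fun s => 3 * ⟪y s, x s⟫ / ‖x s‖ ^ 5) 0 t := by
    simpa using (hinner.const_mul 3).fun_div (hnorm.fun_pow 5) (pow_ne_zero 5 hr0)
  have c₃ : HasDerivAt (fun s => m / ‖x s‖ ^ 3) 0 t := by
    simpa using (hasDerivAt_const t m).fun_div (hnorm.fun_pow 3) (pow_ne_zero 3 hr0)
  have c₄ : HasDerivAt (fun s => ‖x s‖ ^ 2) 0 t := by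
    simpa using hnorm.fun_pow 2
  have hw : HasDerivAt (fun s => ‖x s‖ ^ 2 • y s - ⟪y s, x s⟫ • x s)
      (cross ϖ (‖x t‖ ^ 2 • y t - ⟪y t, x t⟫ • x t)) t := by
    simpa only [← crossL_apply, map_sub] using (c₄.smul_of_rot hy).fun_sub (hinner.smul_of_rot hx)
  simpa only [EP, ← crossL_apply, map_add, map_sub] using
    ((c₁.smul_of_rot (hz.cross_of_rot hx)).fun_sub (c₂.smul_of_rot (hy.cross_of_rot hx))).fun_add
      (c₃.smul_of_rot hw)

end Rotation

/-- Lie-derivative invariance L(𝔵'')(𝓔) = ϖ × 𝓔 under the third-order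
prolongation of infinitesimal Euclidean rotations: 𝓔 is differentiable at every point
with u ≠ 0, and its Fréchet derivative in the direction (ϖ × u, ϖ × u̇, ϖ × ü)
equals ϖ × 𝓔(u, u̇, ü). -/
theorem EP_infinitesimal_invariance (m : ℝ) (ϖ : E3) (u du ddu : E3) (hu : u ≠ 0) :
    DifferentiableAt ℝ (fun p : E3 × E3 × E3 => EP m p.1 p.2.1 p.2.2) (u, du, ddu) ∧
    fderiv ℝ (fun p : E3 × E3 × E3 => EP m p.1 p.2.1 p.2.2) (u, du, ddu)
        (cross ϖ u, cross ϖ du, cross ϖ ddu)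
      = cross ϖ (EP m u du ddu) := by
  have hd := differentiableAt_EP m du ddu hu
  refine ⟨hd, ?_⟩
  have hline (v : E3) :
      HasDerivAt (fun s : ℝ => v + s • cross ϖ v) (cross ϖ (v + (0 : ℝ) • cross ϖ v)) 0 := by
    simpa using ((hasDerivAt_id (0 : ℝ)).smul_const (cross ϖ v)).const_add v
  have hcomp := hd.hasFDerivAt.comp_hasDerivAt_of_eq 0
    ((hline u).prodMk ((hline du).prodMk (hline ddu))) (by simp)
  have hrot := (hline u).EP_of_rot m (hline du) (hline ddu) (by simpa using hu)
  simpa using hcomp.unique hrot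
end
end

section
/- For all u, u̇, ü ∈ ℝ³ with u ≠ 0, every s > 0, and all p, q ∈ ℝ, one has 𝓔(s·u, s²·u̇ + p·u, s³·ü + 3sp·u̇ + q·u) = s·𝓔(u, u̇, ü). In particular 𝓔(u, u̇, ü)·u = 0 (the Weierstrass constraint), i.e. the equation 𝓔 = 0 is strictly reducible: it is well defined on contact elements, independently of parametrization. -/
noncomputable section
open RealInnerProductSpace

lemma cross_add_left' (a b c : E3) : cross (a + b) c = cross a c + cross b c := by
  ext i; fin_cases i <;> simp [cross] <;> ring

lemma cross_smul_left' (r : ℝ) (a b : E3) : cross (r • a) b = r • cross a b := by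
  ext i; fin_cases i <;> simp [cross] <;> ring

lemma cross_self' (a : E3) : cross a a = 0 := by
  ext i; fin_cases i <;> simp [cross] <;> ring

lemma cross_smul_right' (r : ℝ) (a b : E3) : cross a (r • b) = r • cross a b := by
  ext i; fin_cases i <;> simp [cross] <;> ring

lemma inner_cross_right' (a b : E3) : ⟪cross a b, b⟫ = 0 := by
  simp [cross, PiLp.inner_apply, Fin.sum_univ_three]; ring

/-- homogeneity of 𝓔 under third-order reparametrization data (the
strict-reducibility property), and the Weierstrass constraint 𝓔·u = 0. -/
theorem EP_reparametrization_homogeneity (m : ℝ) (u du ddu : E3) (hu : u ≠ 0)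
    (s : ℝ) (hs : 0 < s) (p q : ℝ) :
    EP m (s • u) (s ^ 2 • du + p • u) (s ^ 3 • ddu + (3 * s * p) • du + q • u)
        = s • EP m u du ddu ∧
    ⟪EP m u du ddu, u⟫ = 0 := by
  have hn : ‖u‖ ≠ 0 := norm_ne_zero_iff.mpr hu
  have hs' : s ≠ 0 := ne_of_gt hs
  constructor
  · rw [EP, EP, norm_smul, Real.norm_eq_abs, abs_of_pos hs]
    simp only [cross_add_left', cross_smul_left', cross_smul_right', cross_self',
      inner_add_left, real_inner_smul_left, real_inner_smul_right,
      real_inner_self_eq_norm_sq, smul_zero, add_zero, smul_smul]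
    match_scalars <;> field_simp <;> ring
  · rw [EP]
    simp only [inner_add_left, inner_sub_left, real_inner_smul_left,
      inner_cross_right', real_inner_self_eq_norm_sq]
    ring
end
end

section
/- The Euler–Poisson equation 𝓔 = 0 is invariant under Euclidean motions: if x : I → ℝ³ is a smooth curve with x′(ζ) ≠ 0 and 𝓔(x′(ζ), x″(ζ), x‴(ζ)) = 0 for all ζ ∈ I, then for every Q ∈ SO(3) and b ∈ ℝ³ the curve y(ζ) = Q·x(ζ) + b also satisfies y′(ζ) ≠ 0 and 𝓔(y′(ζ), y″(ζ), y‴(ζ)) = 0 for all ζ ∈ I. -/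
noncomputable section
open RealInnerProductSpace

/-- The triple product identity: ⟪u × v, w⟫ is the determinant of the matrix with rows
u, v, w. -/
lemma inner_cross (u v w : E3) :
    ⟪cross u v, w⟫ = Matrix.det !![u 0, u 1, u 2; v 0, v 1, v 2; w 0, w 1, w 2] := by
  simp [cross, PiLp.inner_apply, RCLike.inner_apply, Fin.sum_univ_three, Matrix.det_fin_three]
  ring

/-- The derivative commutes with a linear isometry. -/
lemma deriv_comp_iso (Q : E3 ≃ₗᵢ[ℝ] E3) (f : ℝ → E3) :
    deriv (fun t => Q (f t)) = fun t => Q (deriv f t) := by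
  funext t
  have h : (fun t => Q (f t)) = (Q.toContinuousLinearEquiv : E3 ≃L[ℝ] E3) ∘ f := rfl
  rw [h, ← fderiv_apply_one_eq_deriv, ContinuousLinearEquiv.comp_fderiv, ← fderiv_apply_one_eq_deriv]
  rfl

/-- The cross product is equivariant under rotations. -/
lemma cross_map (Q : E3 ≃ₗᵢ[ℝ] E3)
    (hQ : LinearMap.det (Q.toLinearEquiv : E3 →ₗ[ℝ] E3) = 1) (a b : E3) :
    cross (Q a) (Q b) = Q (cross a b) := by
  set bas := (EuclideanSpace.basisFun (Fin 3) ℝ).toBasis with hbas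
  set M := LinearMap.toMatrix bas bas (Q.toLinearEquiv : E3 →ₗ[ℝ] E3) with hM
  have hdet : M.det = 1 := by rw [hM, LinearMap.det_toMatrix]; exact hQ
  have hcoord : ∀ (z : E3) (i : Fin 3), Q z i = ∑ j, M i j * z j := by
    intro z i
    have := LinearMap.toMatrix_mulVec_repr bas bas (Q.toLinearEquiv : E3 →ₗ[ℝ] E3) z
    have h2 := congrFun (congrArg (fun f => (f : Fin 3 → ℝ)) this) i
    simpa [Matrix.mulVec, dotProduct, hbas] using h2.symm
  apply ext_inner_right ℝ
  intro w
  rw [← Q.apply_symm_apply w]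
  set c := Q.symm w
  rw [Q.inner_map_map, inner_cross, inner_cross]
  have hA : !![Q a 0, Q a 1, Q a 2; Q b 0, Q b 1, Q b 2; Q c 0, Q c 1, Q c 2]
      = !![a 0, a 1, a 2; b 0, b 1, b 2; c 0, c 1, c 2] * M.transpose := by
    ext i j
    fin_cases i <;> fin_cases j <;>
      simp [Matrix.mul_apply, hcoord, Fin.sum_univ_three, Matrix.transpose_apply] <;> ring
  rw [hA, Matrix.det_mul, Matrix.det_transpose, hdet, mul_one]

/-- The Euler–Poisson expression is equivariant under rotations. -/
lemma EP_map (m : ℝ) (Q : E3 ≃ₗᵢ[ℝ] E3)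
    (hQ : LinearMap.det (Q.toLinearEquiv : E3 →ₗ[ℝ] E3) = 1) (u du ddu : E3) :
    EP m (Q u) (Q du) (Q ddu) = Q (EP m u du ddu) := by
  simp only [EP, cross_map Q hQ, Q.norm_map, Q.inner_map_map, ← Q.map_smul, ← Q.map_sub,
    ← Q.map_add]

/-- invariance of the Euler–Poisson equation 𝓔 = 0 under Euclidean
motions y(ζ) = Q·x(ζ) + b with Q ∈ SO(3). -/
theorem EP_solution_euclidean_invariant (m : ℝ)
    (a b : ℝ) (x : ℝ → E3) (hx : ContDiffOn ℝ (⊤ : ℕ∞) x (Set.Ioo a b))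
    (hx' : ∀ ζ ∈ Set.Ioo a b, deriv x ζ ≠ 0)
    (hsol : ∀ ζ ∈ Set.Ioo a b,
      EP m (deriv x ζ) (deriv (deriv x) ζ) (deriv (deriv (deriv x)) ζ) = 0)
    (Q : E3 ≃ₗᵢ[ℝ] E3) (hQ : LinearMap.det (Q.toLinearEquiv : E3 →ₗ[ℝ] E3) = 1)
    (v : E3) :
    ∀ ζ ∈ Set.Ioo a b,
      deriv (fun t => Q (x t) + v) ζ ≠ 0 ∧
      EP m (deriv (fun t => Q (x t) + v) ζ)
        (deriv (deriv (fun t => Q (x t) + v)) ζ)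
        (deriv (deriv (deriv (fun t => Q (x t) + v))) ζ) = 0 := by
  have hd1 : deriv (fun t => Q (x t) + v) = fun t => Q (deriv x t) := by
    funext t
    rw [deriv_add_const]
    exact congrFun (deriv_comp_iso Q x) t
  intro ζ hζ
  rw [hd1, deriv_comp_iso, deriv_comp_iso]
  refine ⟨by simpa using hx' ζ hζ, ?_⟩
  rw [EP_map m Q hQ, hsol ζ hζ, map_zero]
end
end

section
/- When m = 0, every regularly parametrized circle is an integral curve of the Euler–Poisson equation: if c ∈ ℝ³, r > 0, e₁, e₂ ∈ ℝ³ are orthonormal, and θ : I → ℝ is smooth with θ′(ζ) ≠ 0 for all ζ, then the curve x(ζ) = c + r·cos(θ(ζ))·e₁ + r·sin(θ(ζ))·e₂ satisfies x′(ζ) ≠ 0 and 𝓔₀(x′(ζ), x″(ζ), x‴(ζ)) = 0 for all ζ ∈ I, where 𝓔₀ denotes 𝓔 with m = 0. -/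
noncomputable section
open RealInnerProductSpace

lemma cross_combo (e₁ e₂ : E3) (A B C D : ℝ) :
    cross (A•e₁+B•e₂) (C•e₁+D•e₂) = (A*D - B*C) • cross e₁ e₂ := by
  ext i
  fin_cases i <;>
    simp [cross, WithLp.equiv_symm_apply, PiLp.toLp_apply, PiLp.add_apply, PiLp.smul_apply, smul_eq_mul] <;>
    ring

lemma inner_combo (e₁ e₂ : E3) (he₁ : ‖e₁‖ = 1) (he₂ : ‖e₂‖ = 1) (he₁₂ : ⟪e₁, e₂⟫ = 0)
    (A B C D : ℝ) : ⟪A•e₁+B•e₂, C•e₁+D•e₂⟫ = A*C + B*D := by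
  have h1 : ⟪e₁, e₁⟫ = 1 := by
    rw [real_inner_self_eq_norm_sq, he₁]; norm_num
  have h2 : ⟪e₂, e₂⟫ = 1 := by
    rw [real_inner_self_eq_norm_sq, he₂]; norm_num
  have h3 : ⟪e₂, e₁⟫ = 0 := by rw [real_inner_comm]; exact he₁₂
  simp only [inner_add_left, inner_add_right, real_inner_smul_left, real_inner_smul_right,
    h1, h2, h3, he₁₂]
  ring

/-- when m = 0, every regularly parametrized circle is an integral curve
of the Euler–Poisson equation 𝓔₀ = 0. -/
theorem circles_solve_EP_zero
    (c : E3) (r : ℝ) (hr : 0 < r) (e₁ e₂ : E3)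
    (he₁ : ‖e₁‖ = 1) (he₂ : ‖e₂‖ = 1) (he₁₂ : ⟪e₁, e₂⟫ = 0)
    (a b : ℝ) (θ : ℝ → ℝ) (hθ : ContDiffOn ℝ (⊤ : ℕ∞) θ (Set.Ioo a b))
    (hθ' : ∀ ζ ∈ Set.Ioo a b, deriv θ ζ ≠ 0) :
    ∀ ζ ∈ Set.Ioo a b,
      deriv (fun t => c + (r * Real.cos (θ t)) • e₁ + (r * Real.sin (θ t)) • e₂) ζ ≠ 0 ∧
      EP 0
        (deriv (fun t => c + (r * Real.cos (θ t)) • e₁ + (r * Real.sin (θ t)) • e₂) ζ)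
        (deriv (deriv (fun t => c + (r * Real.cos (θ t)) • e₁ + (r * Real.sin (θ t)) • e₂)) ζ)
        (deriv (deriv (deriv
          (fun t => c + (r * Real.cos (θ t)) • e₁ + (r * Real.sin (θ t)) • e₂))) ζ)
      = 0 := by
  intro ζ hζ
  have hso : IsOpen (Set.Ioo a b) := isOpen_Ioo
  set p := deriv θ with hp_def
  set q := deriv p with hq_def
  set w := deriv q with hw_def
  have hθ1 : ContDiffOn ℝ (⊤ : ℕ∞) p (Set.Ioo a b) := hθ.deriv_of_isOpen hso (by simp)
  have hθ2 : ContDiffOn ℝ (⊤ : ℕ∞) q (Set.Ioo a b) := hθ1.deriv_of_isOpen hso (by simp)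
  have hdθ : ∀ t ∈ Set.Ioo a b, HasDerivAt θ (p t) t := fun t ht =>
    ((hθ.differentiableOn (by simp)).differentiableAt (hso.mem_nhds ht)).hasDerivAt
  have hdp : ∀ t ∈ Set.Ioo a b, HasDerivAt p (q t) t := fun t ht =>
    ((hθ1.differentiableOn (by simp)).differentiableAt (hso.mem_nhds ht)).hasDerivAt
  have hdq : ∀ t ∈ Set.Ioo a b, HasDerivAt q (w t) t := fun t ht =>
    ((hθ2.differentiableOn (by simp)).differentiableAt (hso.mem_nhds ht)).hasDerivAt
  have hsin : ∀ t ∈ Set.Ioo a b, HasDerivAt (fun t => Real.sin (θ t)) (Real.cos (θ t) * p t) t :=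
    fun t ht => (Real.hasDerivAt_sin (θ t)).comp t (hdθ t ht)
  have hcos : ∀ t ∈ Set.Ioo a b,
      HasDerivAt (fun t => Real.cos (θ t)) (-Real.sin (θ t) * p t) t :=
    fun t ht => (Real.hasDerivAt_cos (θ t)).comp t (hdθ t ht)
  set g : ℝ → E3 := fun t => c + (r * Real.cos (θ t)) • e₁ + (r * Real.sin (θ t)) • e₂ with hg_def
  set u : ℝ → E3 := fun t =>
    (-(r * p t * Real.sin (θ t))) • e₁ + (r * p t * Real.cos (θ t)) • e₂ with hu_def
  set du : ℝ → E3 := fun t =>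
    (-(r * q t * Real.sin (θ t)) - r * p t^2 * Real.cos (θ t)) • e₁
      + (r * q t * Real.cos (θ t) - r * p t^2 * Real.sin (θ t)) • e₂ with hdu_def
  set ddu : ℝ → E3 := fun t =>
    (-(r * w t * Real.sin (θ t)) - 3*r*p t*q t*Real.cos (θ t) + r*p t^3*Real.sin (θ t)) • e₁
      + (r*w t*Real.cos (θ t) - 3*r*p t*q t*Real.sin (θ t) - r*p t^3*Real.cos (θ t)) • e₂
    with hddu_def
  have hgd : ∀ t ∈ Set.Ioo a b, HasDerivAt g (u t) t := by
    intro t ht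
    have h := ((((hcos t ht).const_mul r).smul_const e₁).const_add c).add
      (((hsin t ht).const_mul r).smul_const e₂)
    refine h.congr_deriv ?_
    simp only [hu_def]
    match_scalars <;> ring
  have hud : ∀ t ∈ Set.Ioo a b, HasDerivAt u (du t) t := by
    intro t ht
    have h1 : HasDerivAt (fun t => -(r * p t * Real.sin (θ t)))
        (-((r * q t) * Real.sin (θ t) + (r * p t) * (Real.cos (θ t) * p t))) t :=
      ((((hdp t ht).const_mul r).mul (hsin t ht))).neg
    have h2 : HasDerivAt (fun t => r * p t * Real.cos (θ t))
        ((r * q t) * Real.cos (θ t) + (r * p t) * (-Real.sin (θ t) * p t)) t :=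
      (((hdp t ht).const_mul r).mul (hcos t ht))
    have h := (h1.smul_const e₁).add (h2.smul_const e₂)
    refine h.congr_deriv ?_
    simp only [hdu_def]
    match_scalars <;> ring
  have hdud : ∀ t ∈ Set.Ioo a b, HasDerivAt du (ddu t) t := by
    intro t ht
    have hp2 : HasDerivAt (fun t => r * p t^2) (r * (2 * p t * q t)) t :=
      (((hdp t ht).pow 2).const_mul r).congr_deriv (by ring)
    have h1 : HasDerivAt (fun t => -(r * q t * Real.sin (θ t)) - r * p t^2 * Real.cos (θ t))
        (-((r * w t) * Real.sin (θ t) + (r * q t) * (Real.cos (θ t) * p t))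
          - ((r * (2 * p t * q t)) * Real.cos (θ t) + (r * p t^2) * (-Real.sin (θ t) * p t))) t :=
      ((((hdq t ht).const_mul r).mul (hsin t ht)).neg).sub (hp2.mul (hcos t ht))
    have h2 : HasDerivAt (fun t => r * q t * Real.cos (θ t) - r * p t^2 * Real.sin (θ t))
        (((r * w t) * Real.cos (θ t) + (r * q t) * (-Real.sin (θ t) * p t))
          - ((r * (2 * p t * q t)) * Real.sin (θ t) + (r * p t^2) * (Real.cos (θ t) * p t))) t :=
      (((hdq t ht).const_mul r).mul (hcos t ht)).sub (hp2.mul (hsin t ht))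
    have h := (h1.smul_const e₁).add (h2.smul_const e₂)
    refine h.congr_deriv ?_
    simp only [hddu_def]
    match_scalars <;> ring
  have E1 : Set.EqOn (deriv g) u (Set.Ioo a b) := fun t ht => (hgd t ht).deriv
  have E2 : Set.EqOn (deriv (deriv g)) du (Set.Ioo a b) := by
    intro t ht
    have h : deriv g =ᶠ[nhds t] u := Filter.eventuallyEq_of_mem (hso.mem_nhds ht) E1
    rw [h.deriv_eq]; exact (hud t ht).deriv
  have E3' : deriv (deriv (deriv g)) ζ = ddu ζ := by
    have h : deriv (deriv g) =ᶠ[nhds ζ] du := Filter.eventuallyEq_of_mem (hso.mem_nhds hζ) E2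
    rw [h.deriv_eq]; exact (hdud ζ hζ).deriv
  rw [E1 hζ, E2 hζ, E3']
  -- now pure algebra at ζ
  have hP : p ζ ≠ 0 := hθ' ζ hζ
  have pyth : Real.sin (θ ζ)^2 + Real.cos (θ ζ)^2 = 1 := Real.sin_sq_add_cos_sq (θ ζ)
  have hip_self : ⟪u ζ, u ζ⟫ = (r * |p ζ|)^2 := by
    rw [hu_def]
    rw [inner_combo e₁ e₂ he₁ he₂ he₁₂]
    linear_combination r^2*(p ζ)^2*pyth - r^2*(sq_abs (p ζ))
  have hn : ‖u ζ‖ = r * |p ζ| := by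
    have h1 : ‖u ζ‖^2 = (r * |p ζ|)^2 := by
      rw [← real_inner_self_eq_norm_sq]; exact hip_self
    have h2 : (0:ℝ) ≤ r * |p ζ| := by positivity
    nlinarith [norm_nonneg (u ζ)]
  have hnpos : 0 < r * |p ζ| := by positivity
  constructor
  · intro h0
    rw [h0, norm_zero] at hn
    exact hnpos.ne hn
  · simp only [EP, zero_div, zero_smul, add_zero]
    rw [hu_def, hdu_def, hddu_def]
    rw [cross_combo, cross_combo, inner_combo e₁ e₂ he₁ he₂ he₁₂]
    rw [show ‖((-(r * p ζ * Real.sin (θ ζ))) • e₁ + (r * p ζ * Real.cos (θ ζ)) • e₂ : E3)‖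
        = r * |p ζ| from hn]
    rw [smul_smul, smul_smul, ← sub_smul]
    convert zero_smul ℝ (cross e₁ e₂)
    have habs : |p ζ|^2 = p ζ^2 := sq_abs _
    have habs0 : |p ζ| ≠ 0 := abs_ne_zero.mpr hP
    field_simp
    linear_combination
      (3*(p ζ)^4*(q ζ)*(Real.sin (θ ζ)^2+Real.cos (θ ζ)^2)) * pyth
      + (-3*(p ζ)^2*(q ζ)*(Real.sin (θ ζ)^2+Real.cos (θ ζ)^2)) * habs
end
end

section
/- Let Ψ : (ℝ³∖{0}) × ℝ³ → ℝ be differentiable and define F_Ψ(u, u̇) = 3((u̇·u)/‖u‖²)·u̇ − 3((u̇·u)²/‖u‖⁴)·u − m·(u × u̇) + Ψ(u, u̇)·u. Then for all u ≠ 0 and all u̇ ∈ ℝ³ the identity 3u̇ − (∂F_Ψ/∂u̇)(u, u̇)[u] = 3·λ(u, u̇)·u holds, where (∂F_Ψ/∂u̇)(u, u̇)[u] is the partial Fréchet derivative of F_Ψ in the second slot applied to the vector u, and λ(u, u̇) = (u·u̇)/‖u‖² − (1/3)·u·∇_{u̇}Ψ(u, u̇). -/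
noncomputable section
open RealInnerProductSpace

/-- The right-hand side F_Ψ(u, u̇) of the equation solved for the third derivative,
for an arbitrary supplementary function Ψ. -/
def FPsi (m : ℝ) (Ψ : E3 × E3 → ℝ) (u du : E3) : E3 :=
  (3 * (⟪du, u⟫ / ‖u‖ ^ 2)) • du - (3 * (⟪du, u⟫ ^ 2 / ‖u‖ ^ 4)) • u
    - m • cross u du + Ψ (u, du) • u

/-! Differentiating `F_Ψ` in `u̇` term by term and evaluating at `u`, the cross term drops out
because `u × u = 0`, the `Ψ`-term contributes `(∇_{u̇}Ψ · u) u`, and the rest is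
`3u̇ + (3(u̇·u)/‖u‖² − 6(u̇·u)/‖u‖²) u`. -/

lemma cross_self_eq_zero (u : E3) : cross u u = 0 := by
  ext i
  fin_cases i <;> simp [cross] <;> ring

def crossRight (u : E3) : E3 →L[ℝ] E3 :=
  LinearMap.toContinuousLinearMap
    { toFun := cross u
      map_add' := fun a b => by ext i; fin_cases i <;> simp [cross] <;> ring
      map_smul' := fun c a => by ext i; fin_cases i <;> simp [cross] <;> ring }

@[simp]
lemma crossRight_apply (u w : E3) : crossRight u w = cross u w := rfl

lemma fderiv_FPsi_right_apply (m : ℝ) (Ψ : E3 × E3 → ℝ) (u du v : E3)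
    (hΨ : DifferentiableAt ℝ (fun w => Ψ (u, w)) du) :
    fderiv ℝ (fun w => FPsi m Ψ u w) du v =
      (3 * (⟪du, u⟫ / ‖u‖ ^ 2)) • v + (3 * (⟪v, u⟫ / ‖u‖ ^ 2)) • du
        - (6 * (⟪du, u⟫ * ⟪v, u⟫ / ‖u‖ ^ 4)) • u - m • cross u v
        + fderiv ℝ (fun w => Ψ (u, w)) du v • u := by
  have hinner : HasFDerivAt (fun w : E3 => ⟪w, u⟫) (innerSL ℝ u) du := by
    convert (innerSL ℝ u).hasFDerivAt using 1
    ext w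
    exact real_inner_comm u w
  have hFPsi : HasFDerivAt (fun w => FPsi m Ψ u w) _ du :=
    ((((hinner.const_mul (3 / ‖u‖ ^ 2)).smul (hasFDerivAt_id du)).sub
        (((hinner.pow 2).const_mul (3 / ‖u‖ ^ 4)).smul_const u)).sub
      ((crossRight u).hasFDerivAt.const_smul m)).add (hΨ.hasFDerivAt.smul_const u)
      |>.congr_of_eventuallyEq (.of_forall fun w => by
        simp only [FPsi, Pi.add_apply, Pi.sub_apply, Pi.smul_apply', Pi.smul_apply, id,
          crossRight_apply]
        ring_nf)
  rw [hFPsi.fderiv]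
  simp only [add_apply, sub_apply, smul_apply, ContinuousLinearMap.id_apply,
    ContinuousLinearMap.smulRight_apply, coe_innerSL_apply, real_inner_comm v u, id_eq,
    crossRight_apply, Nat.add_one_sub_one, pow_one, nsmul_eq_mul, smul_eq_mul]
  match_scalars <;> ring

/-- the reducibility identity 3u̇ − (∂F_Ψ/∂u̇)[u] = 3λ·u with
λ = (u·u̇)/‖u‖² − (1/3)·u·∇_{u̇}Ψ. -/
theorem FPsi_reducibility_lambda (m : ℝ) (Ψ : E3 × E3 → ℝ)
    (hΨ : ∀ (u du : E3), u ≠ 0 → DifferentiableAt ℝ Ψ (u, du))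
    (u du : E3) (hu : u ≠ 0) :
    (3 : ℝ) • du - fderiv ℝ (fun w => FPsi m Ψ u w) du u
      = (3 * (⟪u, du⟫ / ‖u‖ ^ 2
          - (1 / 3) * ⟪u, gradient (fun w => Ψ (u, w)) du⟫)) • u := by
  have hΨu : DifferentiableAt ℝ (fun w => Ψ (u, w)) du :=
    (hΨ u du hu).comp du ((differentiableAt_const u).prodMk differentiableAt_id)
  have hu_norm : ‖u‖ ≠ 0 := norm_ne_zero_iff.mpr hu
  rw [fderiv_FPsi_right_apply m Ψ u du u hΨu, inner_gradient_right, conj_trivial,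
    real_inner_comm du u, cross_self_eq_zero, real_inner_self_eq_norm_sq]
  match_scalars <;> field_simp <;> ring
end
end

section
/- Let Ψ : (ℝ³∖{0}) × ℝ³ → ℝ be differentiable and suppose there exist constants μ, λ ∈ ℝ such that for all u ≠ 0 and all u̇ ∈ ℝ³: (i) 2Ψ(u, u̇) − 2·u̇·∇_{u̇}Ψ(u, u̇) − u·∇_uΨ(u, u̇) = 3μ, and (ii) u·∇_{u̇}Ψ(u, u̇) = 3(u·u̇)/‖u‖² − 3λ. Then λ = 0. (Compatibility of the system of partial differential equations for Ψ forces the multiplier λ to vanish.) -/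
/-! Restrict Ψ to the line u = s e, u̇ = t e through a unit vector e and write f(s, t) = Ψ(s e, t e).
Then (ii) says ∂ₜf = 3t/s² − 3λ/s, so f(s, t) = f(s, 0) + 3t²/(2s²) − 3λt/s, while (i) says
s ∂ₛf = 2f − 2t ∂ₜf − 3μ. Substituting the first into the second, the terms in t² cancel and
3λt/s is left over; it has to vanish for every t. -/

noncomputable section
open RealInnerProductSpace

theorem DifferentiableAt.hasDerivAt_comp_smul {F : Type*} [NormedAddCommGroup F]
    [InnerProductSpace ℝ F] [CompleteSpace F] {g : F → ℝ} {v : F} {s : ℝ}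
    (hg : DifferentiableAt ℝ g (s • v)) :
    HasDerivAt (fun r : ℝ => g (r • v)) ⟪v, gradient g (s • v)⟫ s :=
  (hg.hasFDerivAt.comp_hasDerivAt s ((hasDerivAt_id s).smul_const v)).congr_deriv (by simp)

theorem sub_eq_sub_of_hasDerivAt_eq {f g f' : ℝ → ℝ} (hf : ∀ x, HasDerivAt f (f' x) x)
    (hg : ∀ x, HasDerivAt g (f' x) x) (a b : ℝ) : f b - f a = g b - g a := by
  have hd : ∀ x, HasDerivAt (f - g) 0 x := fun x => ((hf x).sub (hg x)).congr_deriv (sub_self _)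
  have := is_const_of_deriv_eq_zero (fun x => (hd x).differentiableAt) (fun x => (hd x).deriv) b a
  simp only [Pi.sub_apply] at this
  linarith

theorem lam_eq_zero_of_planar_system {f fs ft : ℝ → ℝ → ℝ} {μ lam : ℝ}
    (hfs : ∀ s t, s ≠ 0 → HasDerivAt (fun r => f r t) (fs s t) s)
    (hft : ∀ s t, s ≠ 0 → HasDerivAt (fun r => f s r) (ft s t) t)
    (h₁ : ∀ s t, s ≠ 0 → 2 * f s t - 2 * (t * ft s t) - s * fs s t = 3 * μ)
    (h₂ : ∀ s t, s ≠ 0 → s * ft s t = 3 * (s * t) / s ^ 2 - 3 * lam) :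
    lam = 0 := by
  have hft_eq : ∀ s t, s ≠ 0 → ft s t = 3 * t / s ^ 2 - 3 * lam / s := fun s t hs => by
    have := h₂ s t hs
    field_simp at this ⊢
    linarith
  have hline : ∀ s, s ≠ 0 → f s 1 = f s 0 + (3 / (2 * s ^ 2) - 3 * lam / s) := fun s hs => by
    have hprofile : ∀ t, HasDerivAt (fun r : ℝ => 3 * r ^ 2 / (2 * s ^ 2) - 3 * lam * r / s)
        (3 * t / s ^ 2 - 3 * lam / s) t := fun t =>
      ((((hasDerivAt_pow 2 t).const_mul 3).div_const (2 * s ^ 2)).sub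
        (((hasDerivAt_id t).const_mul (3 * lam)).div_const s)).congr_deriv (by field_simp; ring)
    have := sub_eq_sub_of_hasDerivAt_eq (fun t => hft_eq s t hs ▸ hft s t hs) hprofile 0 1
    norm_num at this
    linarith
  have hprofile : HasDerivAt (fun s : ℝ => 3 / (2 * s ^ 2) - 3 * lam / s) (-3 + 3 * lam) 1 := by
    have := (((hasDerivAt_pow 2 (1 : ℝ)).const_mul 2).inv (by norm_num)).const_mul 3 |>.sub
      ((hasDerivAt_inv (one_ne_zero' ℝ)).const_mul (3 * lam))
    simp only [div_eq_mul_inv]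
    exact this.congr_deriv (by norm_num)
  have hfs_one : fs 1 1 = fs 1 0 + (-3 + 3 * lam) := by
    refine (hfs 1 1 one_ne_zero).unique
      (((hfs 1 0 one_ne_zero).add hprofile).congr_of_eventuallyEq ?_)
    filter_upwards [eventually_ne_nhds one_ne_zero] with s hs using hline s hs
  have h₁_one := h₁ 1 1 one_ne_zero
  have h₁_zero := h₁ 1 0 one_ne_zero
  have hline_one := hline 1 one_ne_zero
  have hft_one := hft_eq 1 1 one_ne_zero
  norm_num at h₁_one h₁_zero hline_one hft_one
  linarith

/-- compatibility of the system of partial differential equations for Ψ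
forces the multiplier λ to vanish. -/
theorem compatibility_forces_lambda_zero (Ψ : E3 × E3 → ℝ)
    (hΨ : ∀ (u du : E3), u ≠ 0 → DifferentiableAt ℝ Ψ (u, du))
    (μ lam : ℝ)
    (h₁ : ∀ (u du : E3), u ≠ 0 →
      2 * Ψ (u, du) - 2 * ⟪du, gradient (fun w => Ψ (u, w)) du⟫
        - ⟪u, gradient (fun w => Ψ (w, du)) u⟫ = 3 * μ)
    (h₂ : ∀ (u du : E3), u ≠ 0 →
      ⟪u, gradient (fun w => Ψ (u, w)) du⟫ = 3 * ⟪u, du⟫ / ‖u‖ ^ 2 - 3 * lam) :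
    lam = 0 := by
  set e : E3 := EuclideanSpace.single 0 1
  have he : ‖e‖ = 1 := by simp [e]
  have hse : ∀ s : ℝ, s ≠ 0 → s • e ≠ 0 := fun s hs =>
    smul_ne_zero hs (norm_ne_zero_iff.mp (by rw [he]; exact one_ne_zero))
  refine lam_eq_zero_of_planar_system (f := fun s t => Ψ (s • e, t • e))
    (fs := fun s t => ⟪e, gradient (fun w => Ψ (w, t • e)) (s • e)⟫)
    (ft := fun s t => ⟪e, gradient (fun w => Ψ (s • e, w)) (t • e)⟫) (μ := μ) ?_ ?_ ?_ ?_
  · intro s t hs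
    exact ((hΨ (s • e) (t • e) (hse s hs)).comp (s • e)
      (differentiableAt_id.prodMk (differentiableAt_const (t • e)))).hasDerivAt_comp_smul
  · intro s t hs
    exact ((hΨ (s • e) (t • e) (hse s hs)).comp (t • e)
      ((differentiableAt_const (s • e)).prodMk differentiableAt_id)).hasDerivAt_comp_smul
  · intro s t hs
    simpa only [real_inner_smul_left] using h₁ (s • e) (t • e) (hse s hs)
  · intro s t hs
    have hnorm : ‖s • e‖ ^ 2 = s ^ 2 := by rw [norm_smul, he, mul_one, Real.norm_eq_abs, sq_abs]
    have hinner : ⟪s • e, t • e⟫ = s * t := by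
      rw [real_inner_smul_left, real_inner_smul_right, real_inner_self_eq_norm_sq, he]; ring
    simpa only [real_inner_smul_left, hnorm, hinner] using h₂ (s • e) (t • e) (hse s hs)
end
end

section
/- Let μ ∈ ℝ and let ψ : ℝ³ → ℝ be differentiable, and suppose that for all u ∈ ℝ³ with u ≠ 0 and all u̇ ∈ ℝ³ one has 3·(u × u̇)·∇ψ(u × u̇) = 4·ψ(u × u̇) − ‖u‖²·μ. Then μ = 0. (Compatibility of this equation in the variable z = u × u̇ forces the multiplier μ to vanish.) -/
noncomputable section
open RealInnerProductSpace

lemma cross_zero_right (a : E3) : cross a 0 = 0 := by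
  unfold cross
  ext i
  fin_cases i <;> simp

/-- compatibility of the equation 3z·∇ψ(z) = 4ψ(z) − ‖u‖²μ in the
variable z = u × u̇ forces the multiplier μ to vanish. -/
theorem compatibility_forces_mu_zero (μ : ℝ) (ψ : E3 → ℝ)
    (hψ : Differentiable ℝ ψ)
    (h : ∀ (u du : E3), u ≠ 0 →
      3 * ⟪cross u du, gradient ψ (cross u du)⟫ = 4 * ψ (cross u du) - ‖u‖ ^ 2 * μ) :
    μ = 0 := by
  have h1 := h (EuclideanSpace.single 0 (1:ℝ)) 0 (by
    intro hc
    have := congrFun (congrArg (fun v : E3 => (v : Fin 3 → ℝ)) hc) 0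
    simp [EuclideanSpace.single] at this)
  have h2 := h (EuclideanSpace.single 0 (2:ℝ)) 0 (by
    intro hc
    have := congrFun (congrArg (fun v : E3 => (v : Fin 3 → ℝ)) hc) 0
    simp [EuclideanSpace.single] at this)
  rw [cross_zero_right] at h1 h2
  simp [EuclideanSpace.norm_single] at h1 h2
  linarith
end
end

section
/- Let ψ : ℝ³∖{0} → ℝ be differentiable. Then ψ satisfies both 3·z·∇ψ(z) = 4·ψ(z) and z × ∇ψ(z) = 0 for all z ≠ 0 if and only if there exists a constant A ∈ ℝ such that ψ(z) = A·‖z‖^{4/3} for all z ≠ 0. -/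
/-!
Since `z × ∇ψ(z) = 0`, the gradient is radial, `∇ψ(z) = c(z) z`, and Euler's relation forces
`c(z) = p ψ(z) / ‖z‖²` with `p = 4/3`. Then `‖z‖^(-p) ψ(z)` has vanishing derivative, so it is
constant on the connected set `ℝ³ ∖ {0}`. Conversely `A ‖z‖^p` has gradient `p A ‖z‖^(p-2) z`.
-/

noncomputable section
open RealInnerProductSpace

theorem norm_rpow_sub_two {E : Type*} [NormedAddCommGroup E] (p : ℝ) {z : E} (hz : z ≠ 0) :
    ‖z‖ ^ (p - 2) = ‖z‖ ^ p / ‖z‖ ^ 2 := by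
  exact_mod_cast Real.rpow_sub_natCast (norm_ne_zero_iff.mpr hz) p 2

section NormRpow

variable {E : Type*} [NormedAddCommGroup E] [InnerProductSpace ℝ E] [CompleteSpace E]

theorem hasGradientAt_norm_rpow (p : ℝ) {z : E} (hz : z ≠ 0) :
    HasGradientAt (fun w : E => ‖w‖ ^ p) ((p * ‖z‖ ^ (p - 2)) • z) z := by
  rw [hasGradientAt_iff_hasFDerivAt]
  convert! ((hasStrictFDerivAt_norm_sq z).rpow_const (p := p / 2) (by simp [hz])).hasFDerivAt
    using 1
  · ext w
    rw [← Real.rpow_natCast_mul (norm_nonneg _)]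
    ring_nf
  · ext w
    simp only [map_smul, smul_apply, InnerProductSpace.toDual_apply_apply, smul_eq_mul,
      ← Real.rpow_natCast_mul (norm_nonneg _), Nat.cast_ofNat, coe_innerSL_apply, nsmul_eq_mul]
    ring_nf

theorem gradient_eq_of_eq_mul_norm_rpow {ψ : E → ℝ} {A p : ℝ}
    (hψ : ∀ z, z ≠ 0 → ψ z = A * ‖z‖ ^ p) {z : E} (hz : z ≠ 0) :
    gradient ψ z = (p * ψ z / ‖z‖ ^ 2) • z := by
  have hψ_nhds : ψ =ᶠ[nhds z] fun w => A * ‖w‖ ^ p :=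
    Filter.eventually_of_mem (isOpen_compl_singleton.mem_nhds hz) hψ
  have hgrad : HasGradientAt (fun w => A * ‖w‖ ^ p) ((A * (p * ‖z‖ ^ (p - 2))) • z) z := by
    rw [hasGradientAt_iff_hasFDerivAt, ← smul_smul, map_smul]
    exact ((hasGradientAt_norm_rpow p hz).hasFDerivAt).const_mul A
  rw [hψ_nhds.gradient_eq, hgrad.gradient, hψ z hz, norm_rpow_sub_two p hz]
  ring_nf

theorem exists_eq_mul_norm_rpow_of_hasGradientAt (hE : 1 < Module.rank ℝ E) {ψ : E → ℝ}
    {p : ℝ} (hψ : ∀ z, z ≠ 0 → HasGradientAt ψ ((p * ψ z / ‖z‖ ^ 2) • z) z) :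
    ∃ A : ℝ, ∀ z, z ≠ 0 → ψ z = A * ‖z‖ ^ p := by
  have hderiv : ∀ z : E, z ≠ 0 →
      HasFDerivAt (fun w => ‖w‖ ^ (-p) * ψ w) (0 : StrongDual ℝ E) z := by
    intro z hz
    convert! ((hasGradientAt_norm_rpow (-p) hz).hasFDerivAt).mul (hψ z hz).hasFDerivAt
    ext w
    simp only [zero_apply, add_apply, smul_apply, InnerProductSpace.toDual_apply_apply,
      real_inner_smul_left, smul_eq_mul, norm_rpow_sub_two (-p) hz]
    ring
  obtain ⟨A, hA⟩ := isOpen_compl_singleton.exists_is_const_of_fderiv_eq_zero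
    (isConnected_compl_singleton_of_one_lt_rank hE 0).isPreconnected
    (fun z hz => (hderiv z hz).differentiableAt.differentiableWithinAt)
    (fun z hz => (hderiv z hz).fderiv)
  refine ⟨A, fun z hz => ?_⟩
  have hnorm : ‖z‖ ^ (-p) * ‖z‖ ^ p = 1 := by
    rw [Real.rpow_neg (norm_nonneg z), inv_mul_cancel₀]
    exact (Real.rpow_pos_of_pos (norm_pos_iff.mpr hz) p).ne'
  rw [← hA z hz, mul_right_comm, hnorm, one_mul]

end NormRpow

theorem cross_eq_toLp_crossProduct (a b : E3) :
    cross a b = WithLp.toLp 2 (crossProduct a.ofLp b.ofLp) := by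
  ext i
  fin_cases i <;> simp [cross, cross_apply]

theorem cross_eq_zero_iff {z v : E3} (hz : z ≠ 0) : cross z v = 0 ↔ ∃ c : ℝ, c • z = v := by
  have hz' : z.ofLp ≠ 0 := by simpa using hz
  rw [cross_eq_toLp_crossProduct, WithLp.toLp_eq_zero, ← not_ne_iff,
    crossProduct_ne_zero_iff_linearIndependent, LinearIndependent.pair_iff' hz', not_forall_not]
  exact exists_congr fun c => (WithLp.ofLp_injective 2).eq_iff

theorem inner_eq_and_cross_eq_zero_iff {z v : E3} (hz : z ≠ 0) (b : ℝ) :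
    (⟪z, v⟫ = b ∧ cross z v = 0) ↔ v = (b / ‖z‖ ^ 2) • z := by
  have hnorm : ‖z‖ ^ 2 ≠ 0 := pow_ne_zero 2 (norm_ne_zero_iff.mpr hz)
  rw [cross_eq_zero_iff hz]
  constructor
  · rintro ⟨hb, c, rfl⟩
    rw [real_inner_smul_right, real_inner_self_eq_norm_sq] at hb
    rw [← hb, mul_div_cancel_right₀ c hnorm]
  · rintro rfl
    refine ⟨?_, _, rfl⟩
    rw [real_inner_smul_right, real_inner_self_eq_norm_sq, div_mul_cancel₀ b hnorm]

theorem one_lt_rank_E3 : 1 < Module.rank ℝ E3 := by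
  rw [← Module.finrank_eq_rank, finrank_euclideanSpace_fin]
  norm_num

/-- ψ satisfies 3z·∇ψ = 4ψ and z × ∇ψ = 0 away from the origin iff
ψ(z) = A‖z‖^{4/3} for some constant A. -/
theorem psi_characterization (ψ : E3 → ℝ)
    (hψ : ∀ z : E3, z ≠ 0 → DifferentiableAt ℝ ψ z) :
    ((∀ z : E3, z ≠ 0 →
        3 * ⟪z, gradient ψ z⟫ = 4 * ψ z ∧ cross z (gradient ψ z) = 0)) ↔
      (∃ A : ℝ, ∀ z : E3, z ≠ 0 → ψ z = A * ‖z‖ ^ ((4 : ℝ) / 3)) := by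
  have radial : ∀ z : E3, z ≠ 0 →
      (3 * ⟪z, gradient ψ z⟫ = 4 * ψ z ∧ cross z (gradient ψ z) = 0 ↔
        gradient ψ z = ((4 : ℝ) / 3 * ψ z / ‖z‖ ^ 2) • z) := by
    intro z hz
    rw [← inner_eq_and_cross_eq_zero_iff hz]
    exact and_congr_left' ⟨fun h => by linarith, fun h => by linarith⟩
  constructor
  · intro h
    refine exists_eq_mul_norm_rpow_of_hasGradientAt one_lt_rank_E3 fun z hz => ?_
    rw [← (radial z hz).1 (h z hz)]
    exact (hψ z hz).hasGradientAt
  · rintro ⟨A, hA⟩ z hz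
    exact (radial z hz).2 (gradient_eq_of_eq_mul_norm_rpow hA hz)
end
end

section
/- The connection attached to the autogeodesic-path equation is stable, i.e. the right-hand side F of equation (41) satisfies the strict reducibility identities with vanishing multipliers: for all u, u̇ ∈ ℝ³ with u ≠ 0 and u̇ × u ≠ 0, (i) (∂F/∂u̇)(u, u̇)[u] = 3·u̇, and (ii) (∂F/∂u)(u, u̇)[u] + 2·(∂F/∂u̇)(u, u̇)[u̇] = 3·F(u, u̇), where (∂F/∂u) and (∂F/∂u̇) are the partial Fréchet derivatives of F in the first and second slot. -/
noncomputable section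
open RealInnerProductSpace

/-- The right-hand side F(u, u̇) of the third-order autogeodesic-path equation
ü = F(u, u̇) of three-dimensional Euclidean space. -/
def Fauto (m A : ℝ) (u du : E3) : E3 :=
  (3 * (⟪du, u⟫ / ‖u‖ ^ 2)) • du
    - (3 * (⟪du, u⟫ ^ 2 / ‖u‖ ^ 4 - ‖du‖ ^ 2 / (2 * ‖u‖ ^ 2)
        - A * ‖cross du u‖ ^ ((4 : ℝ) / 3) / ‖u‖ ^ 2)) • u
    - m • cross u du


/-!
Both identities are infinitesimal forms of symmetries of `F`. Since `u × u = 0`, moving `u̇`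
along `u` does not change `u̇ × u`, and `t ↦ F(u, u̇ + t u) = F(u, u̇) + 3t u̇ + (3/2)t² u` is a
quadratic polynomial; its derivative at `t = 0` is (i). The field is weighted homogeneous,
`F(s u, s² u̇) = s³ F(u, u̇)` (the exponent `4/3` makes `‖u̇ × u‖^{4/3}` scale like `s⁴`), and
differentiating at `s = 1` gives Euler's identity (ii). Where `u ≠ 0` and `u̇ × u ≠ 0` the
norms involved are smooth, so `F` is jointly differentiable and the derivative along the curve
`s ↦ (s u, s² u̇)` splits into the two partial derivatives.
-/

open Filter Topology

section PartialDerivatives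

variable {E F G : Type*} [NormedAddCommGroup E] [NormedSpace ℝ E] [NormedAddCommGroup F]
  [NormedSpace ℝ F] [NormedAddCommGroup G] [NormedSpace ℝ G]
  {f : E → F → G} {L : E × F →L[ℝ] G} {x : E} {y : F}

theorem HasFDerivAt.partial_fst (hf : HasFDerivAt (fun p : E × F => f p.1 p.2) L (x, y)) :
    HasFDerivAt (fun w => f w y) (L.comp (.inl ℝ E F)) x :=
  HasFDerivAt.comp (f := fun w : E => (w, y)) x hf (hasFDerivAt_prodMk_left x y)

theorem HasFDerivAt.partial_snd (hf : HasFDerivAt (fun p : E × F => f p.1 p.2) L (x, y)) :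
    HasFDerivAt (fun w => f x w) (L.comp (.inr ℝ E F)) y :=
  HasFDerivAt.comp (f := fun w : F => (x, w)) y hf (hasFDerivAt_prodMk_right x y)

theorem euler_of_weighted_homogeneous
    (hf : DifferentiableAt ℝ (fun p : E × F => f p.1 p.2) (x, y)) (k l n : ℕ)
    (hhom : ∀ᶠ s in 𝓝 (1 : ℝ), f (s ^ k • x) (s ^ l • y) = s ^ n • f x y) :
    (k : ℝ) • fderiv ℝ (fun w => f w y) x x + (l : ℝ) • fderiv ℝ (fun w => f x w) y y
      = (n : ℝ) • f x y := by
  set L := fderiv ℝ (fun p : E × F => f p.1 p.2) (x, y)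
  have hL : HasFDerivAt (fun p : E × F => f p.1 p.2) L (x, y) := hf.hasFDerivAt
  have hcurve :
      HasDerivAt (fun s : ℝ => (s ^ k • x, s ^ l • y)) ((k : ℝ) • x, (l : ℝ) • y) 1 := by
    simpa using ((hasDerivAt_pow k (1 : ℝ)).smul_const x).prodMk
      ((hasDerivAt_pow l (1 : ℝ)).smul_const y)
  have halong : HasDerivAt (fun s : ℝ => f (s ^ k • x) (s ^ l • y))
      (L ((k : ℝ) • x, (l : ℝ) • y)) 1 := by
    refine HasFDerivAt.comp_hasDerivAt (l := fun p : E × F => f p.1 p.2) 1 ?_ hcurve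
    simpa using hL
  have hscaling : HasDerivAt (fun s : ℝ => f (s ^ k • x) (s ^ l • y)) ((n : ℝ) • f x y) 1 := by
    refine HasDerivAt.congr_of_eventuallyEq ?_ hhom
    simpa using (hasDerivAt_pow n (1 : ℝ)).smul_const (f x y)
  rw [hL.partial_fst.fderiv, hL.partial_snd.fderiv, ← halong.unique hscaling,
    show ((k : ℝ) • x, (l : ℝ) • y) = (k : ℝ) • (x, 0) + (l : ℝ) • (0, y) by simp, map_add,
    map_smul, map_smul]
  rfl

end PartialDerivatives

theorem cross_add_smul_left (a b : E3) (t : ℝ) : cross (a + t • b) b = cross a b := by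
  ext i; fin_cases i <;> simp [cross] <;> ring

theorem cross_add_smul_right (a b : E3) (t : ℝ) : cross b (a + t • b) = cross b a := by
  ext i; fin_cases i <;> simp [cross] <;> ring

theorem cross_smul_smul (s t : ℝ) (a b : E3) : cross (s • a) (t • b) = (s * t) • cross a b := by
  ext i; fin_cases i <;> simp [cross] <;> ring

theorem differentiable_cross : Differentiable ℝ (fun p : E3 × E3 => cross p.1 p.2) := by
  rw [differentiable_euclidean]
  intro i
  fin_cases i <;> simp [cross] <;> fun_prop

theorem Fauto_add_smul_right (m A : ℝ) {u : E3} (hu : u ≠ 0) (du : E3) (t : ℝ) :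
    Fauto m A u (du + t • u)
      = Fauto m A u du + t • ((3 : ℝ) • du) + t ^ 2 • ((3 / 2 : ℝ) • u) := by
  have hu' : ‖u‖ ≠ 0 := norm_ne_zero_iff.2 hu
  have hinner : ⟪du + t • u, u⟫ = ⟪du, u⟫ + t * ‖u‖ ^ 2 := by
    rw [inner_add_left, real_inner_smul_left, real_inner_self_eq_norm_sq]
  have hnorm : ‖du + t • u‖ ^ 2 = ‖du‖ ^ 2 + 2 * (t * ⟪du, u⟫) + t ^ 2 * ‖u‖ ^ 2 := by
    rw [norm_add_sq_real, real_inner_smul_right, norm_smul, Real.norm_eq_abs, mul_pow, sq_abs]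
  simp only [Fauto, cross_add_smul_left, cross_add_smul_right, hinner, hnorm]
  match_scalars <;> field_simp; ring

theorem Fauto_smul_smul_sq (m A : ℝ) {u : E3} (hu : u ≠ 0) (du : E3) {s : ℝ} (hs : s ≠ 0) :
    Fauto m A (s • u) (s ^ 2 • du) = s ^ 3 • Fauto m A u du := by
  have hu' : ‖u‖ ≠ 0 := norm_ne_zero_iff.2 hu
  have habs : |s| ^ 4 = s ^ 4 := (even_two_mul 2).pow_abs s
  have hcross : ‖cross (s ^ 2 • du) (s • u)‖ ^ (4 / 3 : ℝ)
      = s ^ 4 * ‖cross du u‖ ^ (4 / 3 : ℝ) := by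
    rw [cross_smul_smul, norm_smul, Real.mul_rpow (norm_nonneg _) (norm_nonneg _),
      Real.norm_eq_abs, ← pow_succ, abs_pow, ← Real.rpow_natCast, ← Real.rpow_mul (abs_nonneg s)]
    norm_num [habs]
  rw [Fauto, Fauto, hcross]
  simp only [cross_smul_smul, real_inner_smul_left, real_inner_smul_right, norm_smul,
    Real.norm_eq_abs, mul_pow, sq_abs, habs]
  match_scalars <;> field_simp

theorem hasLineDerivAt_Fauto_snd (m A : ℝ) {u : E3} (hu : u ≠ 0) (du : E3) :
    HasLineDerivAt ℝ (Fauto m A u) ((3 : ℝ) • du) du u := by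
  have hlinear : HasDerivAt (fun t : ℝ => t • ((3 : ℝ) • du)) ((3 : ℝ) • du) 0 := by
    simpa using (hasDerivAt_id' (0 : ℝ)).smul_const ((3 : ℝ) • du)
  have hsquare : HasDerivAt (fun t : ℝ => t ^ 2 • ((3 / 2 : ℝ) • u)) 0 0 := by
    simpa using (hasDerivAt_pow 2 (0 : ℝ)).smul_const ((3 / 2 : ℝ) • u)
  rw [HasLineDerivAt]
  simp only [Fauto_add_smul_right m A hu]
  simpa using (hlinear.const_add (Fauto m A u du)).fun_add hsquare

theorem differentiableAt_Fauto (m A : ℝ) {u du : E3} (hu : u ≠ 0) (hdu : cross du u ≠ 0) :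
    DifferentiableAt ℝ (fun p : E3 × E3 => Fauto m A p.1 p.2) (u, du) := by
  have hinner : DifferentiableAt ℝ (fun p : E3 × E3 => ⟪p.2, p.1⟫) (u, du) :=
    differentiableAt_snd.inner ℝ differentiableAt_fst
  have hnorm_fst : DifferentiableAt ℝ (fun p : E3 × E3 => ‖p.1‖) (u, du) :=
    differentiableAt_fst.norm ℝ hu
  have hnorm_snd : DifferentiableAt ℝ (fun p : E3 × E3 => ‖p.2‖ ^ 2) (u, du) :=
    differentiableAt_snd.norm_sq ℝ
  have hcross : DifferentiableAt ℝ (fun p : E3 × E3 => cross p.1 p.2) (u, du) :=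
    differentiable_cross _
  have hcross_swap : DifferentiableAt ℝ (fun p : E3 × E3 => cross p.2 p.1) (u, du) :=
    DifferentiableAt.comp (g := fun p : E3 × E3 => cross p.1 p.2) (u, du) (differentiable_cross _)
      (differentiableAt_snd.prodMk differentiableAt_fst)
  have hnorm_cross :
      DifferentiableAt ℝ (fun p : E3 × E3 => ‖cross p.2 p.1‖ ^ (4 / 3 : ℝ)) (u, du) :=
    (hcross_swap.norm ℝ hdu).rpow_const (.inl (norm_ne_zero_iff.2 hdu))
  unfold Fauto
  fun_prop (disch := simp [hu])

/-- the connection attached to the autogeodesic-path equation is stable: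
the strict reducibility identities hold with vanishing multipliers. -/
theorem autogeodesic_connection_stable (m A : ℝ) (u du : E3)
    (hu : u ≠ 0) (hdu : cross du u ≠ 0) :
    fderiv ℝ (fun w => Fauto m A u w) du u = (3 : ℝ) • du ∧
    fderiv ℝ (fun w => Fauto m A w du) u u
        + (2 : ℝ) • fderiv ℝ (fun w => Fauto m A u w) du du
      = (3 : ℝ) • Fauto m A u du := by
  have hF := differentiableAt_Fauto m A hu hdu
  constructor
  · rw [← hF.hasFDerivAt.partial_snd.differentiableAt.lineDeriv_eq_fderiv]
    exact (hasLineDerivAt_Fauto_snd m A hu du).lineDeriv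
  · have hhom : ∀ᶠ s in 𝓝 (1 : ℝ), Fauto m A (s ^ 1 • u) (s ^ 2 • du) = s ^ 3 • Fauto m A u du :=
      (eventually_ne_nhds one_ne_zero).mono fun s hs => by
        rw [pow_one, Fauto_smul_smul_sq m A hu du hs]
    simpa using euler_of_weighted_homogeneous hF 1 2 3 hhom
end
end
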